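/- Let B ⊆ N ⊆ GF(2)^{2n} be linear codes with N \ B nonempty, d = min{Wt(v) : v ∈ N \ B}, and t = ⌊(d−1)/2⌋. Define the degenerate minimum-weight decoder D*: for each coset s of N (i.e., each element of GF(2)^{2n}/N), D*(s) is the coset v* + B of B, where v* is a fixed vector of minimal symplectic weight in the coset of N corresponding to s. A vector v leads to a decoding error if v ∉ D*(v + N). Then the minimum symplectic weight of vectors leading to a decoding error is exactly t + 1. -/
import Mathlib


/-- Symplectic weight: number of nonzero pairs. -/
def sWt {n : ℕ} (v : Fin n → ZMod 2 × ZMod 2) : ℕ :=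
  (Finset.univ.filter (fun i => v i ≠ 0)).card

lemma sWt_add_le {n : ℕ} (v w : Fin n → ZMod 2 × ZMod 2) :
    sWt (v + w) ≤ sWt v + sWt w := by
  unfold sWt
  refine le_trans (Finset.card_le_card ?_) (Finset.card_union_le _ _)
  intro i hi
  simp only [Finset.mem_filter, Finset.mem_union, Finset.mem_univ, true_and] at *
  by_contra hc
  push_neg at hc
  exact hi (by simp [hc.1, hc.2])

lemma zmod2_add_self : ∀ a : ZMod 2, a + a = 0 := by decide

lemma self_add_self {n : ℕ} (v : Fin n → ZMod 2 × ZMod 2) : v + v = 0 := by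
  funext i
  show v i + v i = 0
  ext <;> simp [zmod2_add_self]

lemma sWt_eq_zero {n : ℕ} (v : Fin n → ZMod 2 × ZMod 2) (h : sWt v = 0) : v = 0 := by
  unfold sWt at h
  rw [Finset.card_eq_zero] at h
  funext i
  by_contra hc
  have : i ∈ (Finset.univ.filter (fun i => v i ≠ 0)) := by
    simp only [Finset.mem_filter, Finset.mem_univ, true_and]
    exact hc
  simp [h] at this

theorem stmt7 (n d : ℕ) (B N : Submodule (ZMod 2) (Fin n → ZMod 2 × ZMod 2)) (hBN : B ≤ N)
    (hmem : ∃ w, w ∈ N ∧ w ∉ B ∧ sWt w = d)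
    (hmin : ∀ w ∈ N, w ∉ B → d ≤ sWt w)
    (vstar : (Fin n → ZMod 2 × ZMod 2) → (Fin n → ZMod 2 × ZMod 2))
    (hv_coset : ∀ v, vstar v + v ∈ N)
    (hv_const : ∀ v w, v + w ∈ N → vstar v = vstar w)
    (hv_min : ∀ v w, v + w ∈ N → sWt (vstar v) ≤ sWt w) :
    (∀ v, sWt v ≤ (d - 1) / 2 → v + vstar v ∈ B) ∧
    (∃ v, sWt v = (d - 1) / 2 + 1 ∧ v + vstar v ∉ B) := by
  obtain ⟨w, hwN, hwB, hwd⟩ := hmem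
  -- d ≥ 1
  have hd1 : 1 ≤ d := by
    rcases Nat.eq_zero_or_pos d with h0 | h
    · exfalso
      have : w = 0 := sWt_eq_zero w (hwd.trans h0)
      exact hwB (this ▸ B.zero_mem)
    · exact h
  set t := (d - 1) / 2 with ht
  have htd : t + 1 ≤ d := by omega
  have h2t : 2 * t + 1 ≤ d + (d - 1) % 2 := by omega
  have hd2t : d ≤ 2 * t + 2 := by omega
  -- Part 1
  have part1 : ∀ v, sWt v ≤ t → v + vstar v ∈ B := by
    intro v hv
    have hvv : v + v ∈ N := by rw [self_add_self]; exact N.zero_mem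
    have h1 : sWt (vstar v) ≤ sWt v := hv_min v v hvv
    have hsum : sWt (v + vstar v) ≤ 2 * t := by
      calc sWt (v + vstar v) ≤ sWt v + sWt (vstar v) := sWt_add_le _ _
        _ ≤ t + t := by omega
        _ = 2 * t := by ring
    have hN : v + vstar v ∈ N := by rw [add_comm]; exact hv_coset v
    by_contra hc
    have := hmin _ hN hc
    omega
  refine ⟨part1, ?_⟩
  by_contra hcon
  push_neg at hcon
  have hall : ∀ v, sWt v ≤ t + 1 → v + vstar v ∈ B := by
    intro v hv
    rcases Nat.lt_or_ge (sWt v) (t + 1) with h | h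
    · exact part1 v (by omega)
    · exact hcon v (by omega)
  -- split w
  have hcard : (Finset.univ.filter (fun i => w i ≠ 0)).card = d := hwd
  obtain ⟨T, hTsub, hTcard⟩ :=
    Finset.exists_subset_card_eq (s := Finset.univ.filter (fun i => w i ≠ 0)) (n := t + 1)
      (by rw [hcard]; exact htd)
  set v1 : Fin n → ZMod 2 × ZMod 2 := fun i => if i ∈ T then w i else 0 with hv1
  set v2 : Fin n → ZMod 2 × ZMod 2 := fun i => if i ∈ T then 0 else w i with hv2
  have hsplit : v1 + v2 = w := by
    funext i
    show v1 i + v2 i = w i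
    by_cases h : i ∈ T <;> simp [hv1, hv2, h]
  have hv1wt : sWt v1 = t + 1 := by
    unfold sWt
    rw [← hTcard]
    congr 1
    ext i
    simp only [Finset.mem_filter, Finset.mem_univ, true_and, hv1]
    constructor
    · intro h
      by_contra hc
      simp [hc] at h
    · intro h
      have := hTsub h
      simp only [Finset.mem_filter, Finset.mem_univ, true_and] at this
      simp [h, this]
  have hv2wt : sWt v2 = d - (t + 1) := by
    unfold sWt
    rw [← hcard, ← hTcard]
    rw [← Finset.card_sdiff_of_subset hTsub]
    congr 1
    ext i
    simp only [Finset.mem_filter, Finset.mem_univ, true_and, Finset.mem_sdiff, hv2]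
    constructor
    · intro h
      by_cases hc : i ∈ T
      · simp [hc] at h
      · simp [hc] at h; exact ⟨by simp [h], hc⟩
    · rintro ⟨h1, h2⟩
      simpa [h2] using h1
  have hwN' : v1 + v2 ∈ N := by rw [hsplit]; exact hwN
  have hvv : vstar v1 = vstar v2 := hv_const v1 v2 hwN'
  have h1 : v1 + vstar v1 ∈ B := hall v1 (le_of_eq hv1wt)
  have h2 : v2 + vstar v2 ∈ B := hall v2 (by omega)
  have hwB' : w ∈ B := by
    have := B.add_mem h1 h2
    have heq : (v1 + vstar v1) + (v2 + vstar v2) = w := by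
      rw [hvv]
      rw [show (v1 + vstar v2) + (v2 + vstar v2) = (v1 + v2) + (vstar v2 + vstar v2) by ring]
      rw [self_add_self, add_zero, hsplit]
    rwa [heq] at this
  exact hwB hwB'
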